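/- arXiv:1504.00396 — 5 statements merged into one kernel-verified Lean document; each statement's English description precedes it below -/
import Mathlib

section
/- Let M be an n×n real symmetric matrix in block form [[M', X],[Xᵀ, m]], let (w,b) be a unit eigenvector of M with eigenvalue λ, and let v be a unit eigenvector of M' with eigenvalue μ. Then |b · (vᵀX)| = |μ - λ| · |vᵀw|. In particular, |b · vᵀX| ≤ |μ - λ|. -/
open Matrix

theorem stmt1 (n : ℕ) (M : Matrix (Fin (n+1)) (Fin (n+1)) ℝ) (hM : M.IsSymm)
    (w : Fin n → ℝ) (b lam : ℝ)
    (X : Fin n → ℝ) (hX : X = fun i => M i.castSucc (Fin.last n))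
    (M' : Matrix (Fin n) (Fin n) ℝ) (hM' : M' = M.submatrix Fin.castSucc Fin.castSucc)
    (heig : M *ᵥ (Fin.snoc w b : Fin (n+1) → ℝ) = lam • (Fin.snoc w b : Fin (n+1) → ℝ))
    (hunit : ∑ i, w i ^ 2 + b ^ 2 = 1)
    (v : Fin n → ℝ) (μ : ℝ) (hv : M' *ᵥ v = μ • v) (hvunit : ∑ i, v i ^ 2 = 1) :
    |b * (v ⬝ᵥ X)| = |μ - lam| * |v ⬝ᵥ w| ∧ |b * (v ⬝ᵥ X)| ≤ |μ - lam| := by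
  -- row i of eigen equation
  have hrow : ∀ i : Fin n, (M' *ᵥ w) i + b * X i = lam * w i := by
    intro i
    have h := congrFun heig i.castSucc
    simp only [mulVec, dotProduct, Pi.smul_apply, smul_eq_mul] at h ⊢
    rw [Fin.sum_univ_castSucc] at h
    simp only [Fin.snoc_castSucc, Fin.snoc_last] at h
    simpa [hM', hX, mul_comm] using h
  -- dot with v
  have hdot : v ⬝ᵥ (M' *ᵥ w) + b * (v ⬝ᵥ X) = lam * (v ⬝ᵥ w) := by
    have h : ∑ i, v i * ((M' *ᵥ w) i + b * X i) = ∑ i, v i * (lam * w i) :=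
      Finset.sum_congr rfl (fun i _ => by rw [hrow i])
    simp only [mul_add, Finset.sum_add_distrib] at h
    simpa [dotProduct, Finset.mul_sum, mul_comm, mul_left_comm, mul_assoc] using h
  have hM'symm : M'.IsSymm := by
    rw [hM']
    ext i j
    simp [Matrix.transpose_apply, Matrix.submatrix_apply]
    exact congrFun (congrFun hM _) _
  have hvMw : v ⬝ᵥ (M' *ᵥ w) = μ * (v ⬝ᵥ w) := by
    rw [dotProduct_mulVec, ← hM'symm, ← mulVec_transpose, transpose_transpose, hv]
    simp [smul_dotProduct]
  have key : b * (v ⬝ᵥ X) = (lam - μ) * (v ⬝ᵥ w) := by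
    rw [hvMw] at hdot; linarith
  have habs : |b * (v ⬝ᵥ X)| = |μ - lam| * |v ⬝ᵥ w| := by
    rw [key, abs_mul, ← abs_neg (lam - μ)]; ring_nf
  refine ⟨habs, ?_⟩
  rw [habs]
  have hcs : (v ⬝ᵥ w) ^ 2 ≤ (∑ i, v i ^ 2) * (∑ i, w i ^ 2) := by
    simpa [dotProduct] using Finset.sum_mul_sq_le_sq_mul_sq Finset.univ v w
  have hw1 : ∑ i, w i ^ 2 ≤ 1 := by nlinarith [sq_nonneg b]
  have : (v ⬝ᵥ w) ^ 2 ≤ 1 := by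
    rw [hvunit, one_mul] at hcs; exact hcs.trans hw1
  have h1 : |v ⬝ᵥ w| ≤ 1 := by
    nlinarith [abs_nonneg (v ⬝ᵥ w), sq_abs (v ⬝ᵥ w)]
  nlinarith [abs_nonneg (μ - lam), abs_nonneg (v ⬝ᵥ w)]
end

section
/- Cauchy interlacing for consecutive eigenvalues: let M be an n×n real symmetric matrix and M' its top-left (n-1)×(n-1) principal submatrix. Then for each 1 ≤ i ≤ n-1, the eigenvalues (listed in nondecreasing order) satisfy λ_i(M) ≤ λ_i(M') ≤ λ_{i+1}(M). -/
open Matrix Submodule Module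
open scoped RealInnerProductSpace

/-!
Courant–Fischer argument. Padding vectors of `ℝⁿ` with a zero last coordinate is an isometric
embedding `J` along which the quadratic form of `M` restricts to that of `M'`. If `S` is spanned
by orthonormal eigenvectors of `M` with eigenvalues `≥ a`, `W` by orthonormal eigenvectors of `M'`
with eigenvalues `≤ b`, and `dim S + dim W > n + 1`, then `S` meets `J W` in some `J y ≠ 0`, and
`a ‖y‖² ≤ ⟪J y, M (J y)⟫ = ⟪y, M' y⟫ ≤ b ‖y‖²`. For `λᵢ(M) ≤ λᵢ(M')` take the eigenvectors of
`λᵢ(M), …, λₙ₊₁(M)` and of `λ₁(M'), …, λᵢ(M')`; for `λᵢ(M') ≤ λᵢ₊₁(M)` those of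
`λᵢ(M'), …, λₙ(M')` and of `λ₁(M), …, λᵢ₊₁(M)`, with the inequalities reversed.
-/

section Rayleigh

variable {E ι : Type*} [NormedAddCommGroup E] [InnerProductSpace ℝ E] {u : ι → E}

theorem Orthonormal.finrank_span_image (hu : Orthonormal ℝ u) (s : Finset ι) :
    finrank ℝ (span ℝ (u '' s)) = s.card := by
  rw [Set.image_eq_range, ← Fintype.card_coe]
  exact finrank_span_eq_card (hu.comp _ Subtype.val_injective).linearIndependent

variable {T : E →ₗ[ℝ] E} {α : ι → ℝ} {s : Finset ι}

theorem Orthonormal.inner_sum_map_sum (hu : Orthonormal ℝ u)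
    (hT : ∀ i ∈ s, T (u i) = α i • u i) (c : ι → ℝ) :
    ⟪∑ i ∈ s, c i • u i, T (∑ i ∈ s, c i • u i)⟫ = ∑ i ∈ s, α i * (c i * c i) := by
  have hTsum : T (∑ i ∈ s, c i • u i) = ∑ i ∈ s, (α i * c i) • u i := by
    rw [map_sum]
    refine Finset.sum_congr rfl fun i hi => ?_
    rw [map_smul, hT i hi, smul_smul, mul_comm]
  rw [hTsum, hu.inner_sum]
  refine Finset.sum_congr rfl fun i _ => ?_
  simp only [conj_trivial]
  ring

theorem Orthonormal.mul_inner_self_le_inner_map_self (hu : Orthonormal ℝ u)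
    (hT : ∀ i ∈ s, T (u i) = α i • u i) {a : ℝ} (ha : ∀ i ∈ s, a ≤ α i) {x : E}
    (hx : x ∈ span ℝ (u '' s)) : a * ⟪x, x⟫ ≤ ⟪x, T x⟫ := by
  obtain ⟨c, rfl⟩ := (mem_span_image_finset_iff_exists_fun' ℝ).mp hx
  rw [hu.inner_sum_map_sum hT, hu.inner_sum, Finset.mul_sum]
  refine Finset.sum_le_sum fun i hi => ?_
  simpa only [conj_trivial] using mul_le_mul_of_nonneg_right (ha i hi) (mul_self_nonneg (c i))

theorem Orthonormal.inner_map_self_le_mul_inner_self (hu : Orthonormal ℝ u)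
    (hT : ∀ i ∈ s, T (u i) = α i • u i) {b : ℝ} (hb : ∀ i ∈ s, α i ≤ b) {x : E}
    (hx : x ∈ span ℝ (u '' s)) : ⟪x, T x⟫ ≤ b * ⟪x, x⟫ := by
  have hneg : ∀ i ∈ s, (-T) (u i) = (-α) i • u i := fun i hi => by simp [hT i hi]
  have := hu.mul_inner_self_le_inner_map_self hneg (a := -b)
    (fun i hi => neg_le_neg (hb i hi)) hx
  simpa [inner_neg_right] using this

end Rayleigh

section Compression

variable {E E' ι κ : Type*} [NormedAddCommGroup E] [InnerProductSpace ℝ E]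
  [FiniteDimensional ℝ E] [NormedAddCommGroup E'] [InnerProductSpace ℝ E']
  {J : E' →ₗᵢ[ℝ] E} {T : E →ₗ[ℝ] E} {T' : E' →ₗ[ℝ] E'}
  {u : ι → E} {α : ι → ℝ} {s : Finset ι} {v : κ → E'} {β : κ → ℝ} {t : Finset κ}

theorem exists_ne_zero_of_finrank_lt_card_add_card (hu : Orthonormal ℝ u) (hv : Orthonormal ℝ v)
    (hst : finrank ℝ E < s.card + t.card) :
    ∃ y ≠ 0, J y ∈ span ℝ (u '' s) ∧ y ∈ span ℝ (v '' t) := by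
  have hW : finrank ℝ ((span ℝ (v '' t)).map J.toLinearMap) = t.card := by
    rw [← (equivMapOfInjective _ J.injective _).finrank_eq, hv.finrank_span_image]
  have : ¬ Disjoint (span ℝ (u '' s)) ((span ℝ (v '' t)).map J.toLinearMap) := fun h =>
    (finrank_add_finrank_le_of_disjoint h).not_gt (by rwa [hu.finrank_span_image, hW])
  simp only [disjoint_def, not_forall] at this
  obtain ⟨_, hJy, ⟨y, hy, rfl⟩, hy0⟩ := this
  exact ⟨y, fun h => hy0 (by simp [h]), hJy, hy⟩

theorem le_of_compression (hJ : ∀ y, ⟪J y, T (J y)⟫ = ⟪y, T' y⟫)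
    (hu : Orthonormal ℝ u) (hTu : ∀ i ∈ s, T (u i) = α i • u i)
    (hv : Orthonormal ℝ v) (hT'v : ∀ j ∈ t, T' (v j) = β j • v j)
    (hst : finrank ℝ E < s.card + t.card) {a b : ℝ} (ha : ∀ i ∈ s, a ≤ α i)
    (hb : ∀ j ∈ t, β j ≤ b) : a ≤ b := by
  obtain ⟨y, hy0, hJy, hy⟩ := exists_ne_zero_of_finrank_lt_card_add_card (J := J) hu hv hst
  refine le_of_mul_le_mul_right ?_ (real_inner_self_pos.mpr hy0)
  calc a * ⟪y, y⟫ = a * ⟪J y, J y⟫ := by rw [J.inner_map_map]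
    _ ≤ ⟪J y, T (J y)⟫ := hu.mul_inner_self_le_inner_map_self hTu ha hJy
    _ = ⟪y, T' y⟫ := hJ y
    _ ≤ b * ⟪y, y⟫ := hv.inner_map_self_le_mul_inner_self hT'v hb hy

theorem le_of_compression' (hJ : ∀ y, ⟪J y, T (J y)⟫ = ⟪y, T' y⟫)
    (hu : Orthonormal ℝ u) (hTu : ∀ i ∈ s, T (u i) = α i • u i)
    (hv : Orthonormal ℝ v) (hT'v : ∀ j ∈ t, T' (v j) = β j • v j)
    (hst : finrank ℝ E < s.card + t.card) {a b : ℝ} (ha : ∀ i ∈ s, α i ≤ a)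
    (hb : ∀ j ∈ t, b ≤ β j) : b ≤ a := by
  have hJneg : ∀ y, ⟪J y, (-T) (J y)⟫ = ⟪y, (-T') y⟫ := fun y => by simp [inner_neg_right, hJ]
  have := le_of_compression hJneg hu (α := -α) (fun i hi => by simp [hTu i hi])
    hv (β := -β) (fun j hj => by simp [hT'v j hj]) hst (a := -a) (b := -b)
    (fun i hi => neg_le_neg (ha i hi)) (fun j hj => neg_le_neg (hb j hj))
  exact neg_le_neg_iff.mp this

end Compression

namespace Matrix

variable {ι κ : Type*} [Fintype ι] [DecidableEq ι]

theorem conjTranspose_one_submatrix_mul_mul (e : κ → ι) (A : Matrix ι ι ℝ) :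
    ((1 : Matrix ι ι ℝ).submatrix id e)ᴴ * A * (1 : Matrix ι ι ℝ).submatrix id e
      = A.submatrix e e := by
  ext i j
  simp [mul_apply, one_apply]

variable [Fintype κ] [DecidableEq κ]

theorem inner_toEuclideanLin_mul_mul (P : Matrix ι κ ℝ) (A : Matrix ι ι ℝ)
    (x y : EuclideanSpace ℝ κ) :
    ⟪toEuclideanLin P x, toEuclideanLin A (toEuclideanLin P y)⟫
      = ⟪x, toEuclideanLin (Pᴴ * A * P) y⟫ := by
  rw [toLpLin_mul (q := 2), toLpLin_mul (q := 2), toEuclideanLin_conjTranspose_eq_adjoint]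
  exact (LinearMap.adjoint_inner_right _ _ _).symm

noncomputable def _root_.EuclideanSpace.extendByZero (e : κ ↪ ι) :
    EuclideanSpace ℝ κ →ₗᵢ[ℝ] EuclideanSpace ℝ ι :=
  (toEuclideanLin ((1 : Matrix ι ι ℝ).submatrix id e)).isometryOfInner fun x y => by
    simpa only [conjTranspose_one_submatrix_mul_mul, submatrix_one_embedding, toLpLin_one,
      LinearMap.id_apply] using
      inner_toEuclideanLin_mul_mul ((1 : Matrix ι ι ℝ).submatrix id e) 1 x y

theorem inner_extendByZero_toEuclideanLin (e : κ ↪ ι) (A : Matrix ι ι ℝ)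
    (x : EuclideanSpace ℝ κ) :
    ⟪EuclideanSpace.extendByZero e x, toEuclideanLin A (EuclideanSpace.extendByZero e x)⟫
      = ⟪x, toEuclideanLin (A.submatrix e e) x⟫ := by
  rw [← conjTranspose_one_submatrix_mul_mul]
  exact inner_toEuclideanLin_mul_mul _ A x x

theorem IsHermitian.toEuclideanLin_eigenvectorBasis {A : Matrix ι ι ℝ} (hA : A.IsHermitian)
    (i : ι) :
    toEuclideanLin A (hA.eigenvectorBasis i) = hA.eigenvalues i • hA.eigenvectorBasis i := by
  rw [toLpLin_apply, hA.mulVec_eigenvectorBasis, WithLp.toLp_smul, WithLp.toLp_ofLp]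

end Matrix

theorem stmt4 (n : ℕ) (M : Matrix (Fin (n+1)) (Fin (n+1)) ℝ) (hM : M.IsHermitian)
    (hM' : (M.submatrix Fin.castSucc Fin.castSucc).IsHermitian)
    (σ : Equiv.Perm (Fin (n+1))) (τ : Equiv.Perm (Fin n))
    (hσ : Monotone (hM.eigenvalues ∘ σ)) (hτ : Monotone (hM'.eigenvalues ∘ τ)) :
    ∀ i : Fin n,
      hM.eigenvalues (σ i.castSucc) ≤ hM'.eigenvalues (τ i) ∧
      hM'.eigenvalues (τ i) ≤ hM.eigenvalues (σ i.succ) := by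
  intro i
  have hJ := inner_extendByZero_toEuclideanLin Fin.castSuccEmb M
  have hu := hM.eigenvectorBasis.orthonormal.comp σ σ.injective
  have hv := hM'.eigenvectorBasis.orthonormal.comp τ τ.injective
  have hTu (j : Fin (n + 1)) : toEuclideanLin M (hM.eigenvectorBasis (σ j))
      = hM.eigenvalues (σ j) • hM.eigenvectorBasis (σ j) :=
    hM.toEuclideanLin_eigenvectorBasis (σ j)
  have hT'v (j : Fin n) :
      toEuclideanLin (M.submatrix Fin.castSucc Fin.castSucc) (hM'.eigenvectorBasis (τ j))
        = hM'.eigenvalues (τ j) • hM'.eigenvectorBasis (τ j) :=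
    hM'.toEuclideanLin_eigenvectorBasis (τ j)
  constructor
  · refine le_of_compression hJ hu (s := .Ici i.castSucc) (fun j _ => hTu j)
      hv (t := .Iic i) (fun j _ => hT'v j) ?_
      (fun j hj => hσ (Finset.mem_Ici.mp hj)) (fun j hj => hτ (Finset.mem_Iic.mp hj))
    simp only [finrank_euclideanSpace_fin, Fin.card_Ici, Fin.card_Iic, Fin.val_castSucc]
    omega
  · refine le_of_compression' hJ hu (s := .Iic i.succ) (fun j _ => hTu j)
      hv (t := .Ici i) (fun j _ => hT'v j) ?_
      (fun j hj => hσ (Finset.mem_Iic.mp hj)) (fun j hj => hτ (Finset.mem_Ici.mp hj))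
    simp only [finrank_euclideanSpace_fin, Fin.card_Ici, Fin.card_Iic, Fin.val_succ]
    omega
end

section
/- If x ∈ S^{n-1} is incompressible with parameters c_0, c_1 (i.e., x has distance greater than c_1 from every vector with at most c_0·n nonzero coordinates), then at least c_0c_1²n/2 coordinates x_k of x satisfy c_1/√(2n) ≤ |x_k| ≤ 1/√(c_0 n). -/
open Finset

theorem stmt7 (n : ℕ) (c0 c1 : ℝ) (hc0 : 0 < c0 ∧ c0 < 1) (hc1 : 0 < c1 ∧ c1 < 1)
    (x : Fin n → ℝ) (hx : ∑ i, x i ^ 2 = 1)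
    (hincomp : ∀ y : Fin n → ℝ, (({i | y i ≠ 0} : Set (Fin n)).ncard : ℝ) ≤ c0 * n →
      c1 < Real.sqrt (∑ i, (x i - y i) ^ 2)) :
    c0 * c1 ^ 2 * n / 2 ≤
      (({k : Fin n | c1 / Real.sqrt (2 * n) ≤ |x k| ∧ |x k| ≤ 1 / Real.sqrt (c0 * n)} :
        Set (Fin n)).ncard : ℝ) := by
  classical
  have hn : 0 < n := by
    rcases Nat.eq_zero_or_pos n with h | h
    · subst h; simp at hx
    · exact h
  have hnR : (0:ℝ) < n := by exact_mod_cast hn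
  have hc0n : (0:ℝ) < c0 * n := mul_pos hc0.1 hnR
  set s := Real.sqrt (c0 * n) with hs
  have hspos : 0 < s := Real.sqrt_pos.mpr hc0n
  have hs2 : s ^ 2 = c0 * n := Real.sq_sqrt hc0n.le
  set t := Real.sqrt (2 * n) with ht
  have htpos : 0 < t := Real.sqrt_pos.mpr (by positivity)
  have ht2 : t ^ 2 = 2 * n := Real.sq_sqrt (by positivity)
  set B : Finset (Fin n) := univ.filter (fun k => 1 / s < |x k|) with hB
  have hbig : ∀ k ∈ B, 1 / (c0 * n) ≤ x k ^ 2 := by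
    intro k hk
    rw [hB, mem_filter] at hk
    have h2 : (1/s)^2 ≤ |x k|^2 := pow_le_pow_left₀ (by positivity) hk.2.le 2
    rwa [div_pow, one_pow, hs2, sq_abs] at h2
  have hsum1 : ∑ k ∈ B, x k ^ 2 ≤ 1 := by
    rw [← hx]
    exact Finset.sum_le_sum_of_subset_of_nonneg (subset_univ B) (fun i _ _ => sq_nonneg _)
  have hBcard : (B.card : ℝ) ≤ c0 * n := by
    have h1 : (B.card : ℝ) * (1 / (c0 * n)) ≤ ∑ k ∈ B, x k ^ 2 := by
      calc (B.card : ℝ) * (1/(c0*n)) = ∑ _k ∈ B, 1/(c0*n) := by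
            rw [Finset.sum_const, nsmul_eq_mul]
        _ ≤ _ := Finset.sum_le_sum hbig
    have h2 := h1.trans hsum1
    rwa [mul_one_div, div_le_one hc0n] at h2
  set y : Fin n → ℝ := fun k => if 1 / s < |x k| then x k else 0 with hy
  have hsupp : (({i | y i ≠ 0} : Set (Fin n)).ncard : ℝ) ≤ c0 * n := by
    have hsub : {i | y i ≠ 0} ⊆ (B : Set (Fin n)) := by
      intro i hi
      simp only [Set.mem_setOf_eq, hy] at hi
      by_cases h : 1 / s < |x i|
      · exact Finset.mem_coe.mpr (Finset.mem_filter.mpr ⟨mem_univ i, h⟩)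
      · rw [if_neg h] at hi; exact absurd rfl hi
    have := Set.ncard_le_ncard hsub (B : Set (Fin n)).toFinite
    rw [Set.ncard_coe_finset] at this
    calc (({i | y i ≠ 0} : Set (Fin n)).ncard : ℝ) ≤ (B.card : ℝ) := by exact_mod_cast this
      _ ≤ c0 * n := hBcard
  set C : Finset (Fin n) := univ.filter (fun k => |x k| ≤ 1 / s) with hCdef
  have hC : c1 ^ 2 < ∑ k ∈ C, x k ^ 2 := by
    have h := hincomp y hsupp
    have hrw : ∑ i, (x i - y i)^2 = ∑ k ∈ C, x k ^ 2 := by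
      rw [hCdef, Finset.sum_filter]
      apply Finset.sum_congr rfl
      intro i _
      simp only [hy]
      by_cases hi : 1 / s < |x i|
      · rw [if_pos hi, if_neg (not_le.mpr hi), sub_self]
        norm_num
      · rw [if_neg hi, if_pos (not_lt.mp hi), sub_zero]
    rw [hrw] at h
    have hnonneg : 0 ≤ ∑ k ∈ C, x k ^ 2 := Finset.sum_nonneg (fun k _ => sq_nonneg _)
    exact (Real.lt_sqrt hc1.1.le).mp h
  set M : Finset (Fin n) := C.filter (fun k => c1 / t ≤ |x k|) with hMdef
  set S : Finset (Fin n) := C.filter (fun k => ¬ (c1 / t ≤ |x k|)) with hSdef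
  have hsplit : ∑ k ∈ M, x k ^ 2 + ∑ k ∈ S, x k ^ 2 = ∑ k ∈ C, x k ^ 2 :=
    Finset.sum_filter_add_sum_filter_not C _ _
  have hSsum : ∑ k ∈ S, x k ^ 2 ≤ c1 ^ 2 / 2 := by
    have h1 : ∑ k ∈ S, x k ^ 2 ≤ ∑ _k ∈ S, c1 ^ 2 / (2 * n) := by
      apply Finset.sum_le_sum
      intro k hk
      rw [hSdef, mem_filter] at hk
      have h2 : |x k| < c1 / t := not_le.mp hk.2
      have h3 : |x k| ^ 2 ≤ (c1 / t) ^ 2 := pow_le_pow_left₀ (abs_nonneg _) h2.le 2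
      rw [sq_abs, div_pow, ht2] at h3
      exact h3
    have h2 : (S.card : ℝ) ≤ n := by
      exact_mod_cast (Finset.card_le_card (Finset.subset_univ S)).trans_eq (Finset.card_univ.trans (Fintype.card_fin n))
    calc ∑ k ∈ S, x k ^ 2 ≤ ∑ _k ∈ S, c1 ^ 2 / (2 * n) := h1
      _ = (S.card : ℝ) * (c1 ^ 2 / (2 * n)) := by rw [Finset.sum_const, nsmul_eq_mul]
      _ ≤ n * (c1 ^ 2 / (2 * n)) := by
          apply mul_le_mul_of_nonneg_right h2 (by positivity)
      _ = c1 ^ 2 / 2 := by field_simp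
  have hMsum : ∑ k ∈ M, x k ^ 2 ≤ (M.card : ℝ) / (c0 * n) := by
    have h1 : ∑ k ∈ M, x k ^ 2 ≤ ∑ _k ∈ M, 1 / (c0 * n) := by
      apply Finset.sum_le_sum
      intro k hk
      rw [hMdef, mem_filter, hCdef, mem_filter] at hk
      have h2 : |x k| ^ 2 ≤ (1 / s) ^ 2 := pow_le_pow_left₀ (abs_nonneg _) hk.1.2 2
      rwa [sq_abs, div_pow, one_pow, hs2] at h2
    calc ∑ k ∈ M, x k ^ 2 ≤ ∑ _k ∈ M, 1 / (c0 * n) := h1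
      _ = (M.card : ℝ) * (1 / (c0 * n)) := by rw [Finset.sum_const, nsmul_eq_mul]
      _ = (M.card : ℝ) / (c0 * n) := by rw [mul_one_div]
  have hkey : c1 ^ 2 / 2 < (M.card : ℝ) / (c0 * n) := by
    have : c1 ^ 2 - c1 ^ 2 / 2 < ∑ k ∈ M, x k ^ 2 := by linarith [hsplit, hSsum, hC]
    linarith [hMsum]
  have hfinal : c0 * c1 ^ 2 * n / 2 ≤ (M.card : ℝ) := by
    have h := (div_lt_div_iff₀ (by norm_num) hc0n).mp hkey
    nlinarith
  have hset : (({k : Fin n | c1 / Real.sqrt (2 * n) ≤ |x k| ∧ |x k| ≤ 1 / Real.sqrt (c0 * n)} :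
      Set (Fin n)).ncard : ℝ) = (M.card : ℝ) := by
    congr 1
    rw [Set.ncard_eq_toFinset_card', Set.toFinset_setOf]
    congr 1
    rw [hMdef, hCdef, Finset.filter_filter]
    apply Finset.filter_congr
    intro k _
    rw [← hs, ← ht]
    constructor
    · rintro ⟨h1, h2⟩; exact ⟨h2, h1⟩
    · rintro ⟨h1, h2⟩; exact ⟨h2, h1⟩
  rw [hset]
  exact hfinal
end

section
/- Tensorization: let ζ_1,...,ζ_n be independent non-negative random variables and K, t_0 > 0. If P(ζ_k < t) ≤ Kt for all k = 1,...,n and all t ≥ t_0, then there is an absolute constant C such that P(∑_{k=1}^n ζ_k² < t²n) ≤ (CKt)^n for all t ≥ t_0. -/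
/-!
Exponential Markov inequality for the lower tail. On the event `∑ ζₖ² < t²n` one has
`∑ 2ζₖ/t ≤ ∑ (ζₖ²/t² + 1) < 2n`, so the event has probability at most
`e^{2n} 𝔼 exp(-∑ 2ζₖ/t) = e^{2n} ∏ 𝔼 exp(-2ζₖ/t)` by independence. Each factor is at most `2Kt`:
splitting according to `ζₖ ∈ [jt, (j+1)t)`, it is bounded by
`∑ⱼ e^{-2j} P(ζₖ < (j+1)t) ≤ Kt ∑ⱼ e^{-2j}(j+1) ≤ Kt ∑ⱼ 2^{-j}`.
Hence `C = 2e²` works.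
-/

open MeasureTheory ProbabilityTheory Real

theorem sum_two_mul_div_le_of_sum_sq_le {ι : Type*} [Fintype ι] {a : ι → ℝ} {t : ℝ}
    (ht : 0 < t) (h : ∑ i, a i ^ 2 ≤ t ^ 2 * Fintype.card ι) :
    ∑ i, 2 * a i / t ≤ 2 * Fintype.card ι := by
  have amgm : ∀ i, 2 * a i / t ≤ a i ^ 2 / t ^ 2 + 1 := fun i => by
    rw [div_add_one (by positivity), div_le_div_iff₀ ht (by positivity)]
    nlinarith [sq_nonneg (a i - t)]
  have hsq : ∑ i, a i ^ 2 / t ^ 2 ≤ Fintype.card ι := by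
    rw [← Finset.sum_div, div_le_iff₀ (by positivity)]
    linarith
  calc ∑ i, 2 * a i / t ≤ ∑ i, (a i ^ 2 / t ^ 2 + 1) := Finset.sum_le_sum fun i _ => amgm i
    _ ≤ 2 * Fintype.card ι := by
      rw [Finset.sum_add_distrib, Finset.sum_const, Finset.card_univ, nsmul_one]
      linarith

theorem exp_neg_two_mul_mul_add_one_le (j : ℕ) : exp (-(2 * j)) * (j + 1) ≤ 2⁻¹ ^ j :=
  calc exp (-(2 * j)) * (j + 1) ≤ exp (-(2 * j)) * exp j := by
        gcongr
        linarith [add_one_le_exp (j : ℝ)]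
    _ = exp (-1) ^ j := by rw [← exp_add, ← exp_nat_mul]; ring_nf
    _ ≤ 2⁻¹ ^ j := by
        gcongr
        linarith [exp_neg_one_lt_half]

theorem ofReal_exp_neg_le_tsum_ite {x t : ℝ} (hx : 0 ≤ x) (ht : 0 < t) :
    ENNReal.ofReal (exp (-(2 * x / t))) ≤
      ∑' j : ℕ, if x < (j + 1) * t then ENNReal.ofReal (exp (-(2 * j))) else 0 := by
  set j := ⌊x / t⌋₊
  have hj : (j : ℝ) ≤ x / t := Nat.floor_le (div_nonneg hx ht.le)
  have hxj : x < (j + 1) * t := (div_lt_iff₀ ht).1 (Nat.lt_floor_add_one _)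
  refine le_trans ?_ (ENNReal.le_tsum j)
  rw [if_pos hxj]
  gcongr
  rw [mul_div_assoc]
  linarith

variable {Ω : Type*} [MeasurableSpace Ω] {μ : Measure Ω}

theorem lintegral_exp_neg_le_of_measure_lt_le {X : Ω → ℝ} (hX : Measurable X)
    (hX₀ : ∀ ω, 0 ≤ X ω) {K t : ℝ} (hK : 0 ≤ K) (ht : 0 < t)
    (hsmall : ∀ s, t ≤ s → μ {ω | X ω < s} ≤ ENNReal.ofReal (K * s)) :
    ∫⁻ ω, ENNReal.ofReal (exp (-(2 * X ω / t))) ∂μ ≤ ENNReal.ofReal (2 * K * t) := by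
  set A : ℕ → Set Ω := fun j => {ω | X ω < (j + 1) * t}
  have hA : ∀ j, MeasurableSet (A j) := fun j => measurableSet_lt hX measurable_const
  have hterm : ∀ j : ℕ, ENNReal.ofReal (exp (-(2 * j))) * μ (A j) ≤
      2⁻¹ ^ j * ENNReal.ofReal (K * t) := fun j => by
    have hjt : t ≤ (j + 1) * t := le_mul_of_one_le_left ht.le (by linarith [j.cast_nonneg (α := ℝ)])
    calc ENNReal.ofReal (exp (-(2 * j))) * μ (A j)
        ≤ ENNReal.ofReal (exp (-(2 * j))) * ENNReal.ofReal (K * ((j + 1) * t)) := by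
          gcongr; exact hsmall _ hjt
      _ = ENNReal.ofReal (exp (-(2 * j)) * (j + 1) * (K * t)) := by
          rw [← ENNReal.ofReal_mul (exp_pos _).le]; ring_nf
      _ ≤ ENNReal.ofReal (2⁻¹ ^ j * (K * t)) := by
          exact ENNReal.ofReal_le_ofReal
            (mul_le_mul_of_nonneg_right (exp_neg_two_mul_mul_add_one_le j) (by positivity))
      _ = 2⁻¹ ^ j * ENNReal.ofReal (K * t) := by
          rw [ENNReal.ofReal_mul (by positivity), ENNReal.ofReal_pow (by norm_num),
            ENNReal.ofReal_inv_of_pos two_pos, ENNReal.ofReal_ofNat]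
  calc ∫⁻ ω, ENNReal.ofReal (exp (-(2 * X ω / t))) ∂μ
      ≤ ∫⁻ ω, ∑' j : ℕ, (A j).indicator (fun _ => ENNReal.ofReal (exp (-(2 * j)))) ω ∂μ := by
        refine lintegral_mono fun ω => ?_
        simpa only [Set.indicator_apply, A, Set.mem_ofPred_eq] using
          ofReal_exp_neg_le_tsum_ite (hX₀ ω) ht
    _ = ∑' j : ℕ, ENNReal.ofReal (exp (-(2 * j))) * μ (A j) := by
        rw [lintegral_tsum fun j => (measurable_const.indicator (hA j)).aemeasurable]
        simp only [lintegral_indicator_const (hA _)]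
    _ ≤ ∑' j : ℕ, 2⁻¹ ^ j * ENNReal.ofReal (K * t) := ENNReal.tsum_le_tsum hterm
    _ = ENNReal.ofReal (2 * K * t) := by
        rw [ENNReal.tsum_mul_right, ENNReal.tsum_geometric, ENNReal.one_sub_inv_two, inv_inv,
          mul_assoc, ENNReal.ofReal_mul two_pos.le, ENNReal.ofReal_ofNat]

theorem measure_sum_le_le_of_iIndepFun {ι : Type*} [Fintype ι] {X : ι → Ω → ℝ}
    (hX : ∀ i, Measurable (X i)) (hindep : iIndepFun X μ) {b : ENNReal}
    (hb : ∀ i, ∫⁻ ω, ENNReal.ofReal (exp (-X i ω)) ∂μ ≤ b) (a : ℝ) :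
    μ {ω | ∑ i, X i ω ≤ a} ≤ ENNReal.ofReal (exp a) * b ^ Fintype.card ι := by
  set Y : ι → Ω → ENNReal := fun i ω => ENNReal.ofReal (exp (-X i ω))
  have hY : ∀ i, Measurable (Y i) := fun i => by fun_prop
  have hYindep : iIndepFun Y μ :=
    hindep.comp (fun _ x => ENNReal.ofReal (exp (-x))) fun _ => by fun_prop
  have hsub : {ω | ∑ i, X i ω ≤ a} ⊆ {ω | 1 ≤ ENNReal.ofReal (exp a) * ∏ i, Y i ω} := by
    intro ω (hω : ∑ i, X i ω ≤ a)
    rw [Set.mem_ofPred_eq, ← ENNReal.ofReal_prod_of_nonneg fun i _ => (exp_pos _).le,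
      ← ENNReal.ofReal_mul (exp_pos _).le, ← exp_sum, ← exp_add, Finset.sum_neg_distrib]
    exact ENNReal.one_le_ofReal.2 (one_le_exp (by linarith))
  calc μ {ω | ∑ i, X i ω ≤ a}
      ≤ μ {ω | 1 ≤ ENNReal.ofReal (exp a) * ∏ i, Y i ω} := measure_mono hsub
    _ ≤ ∫⁻ ω, ENNReal.ofReal (exp a) * ∏ i, Y i ω ∂μ := by
        simpa using mul_meas_ge_le_lintegral₀ (μ := μ) (by fun_prop) 1
    _ = ENNReal.ofReal (exp a) * ∏ i, ∫⁻ ω, Y i ω ∂μ := by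
        rw [lintegral_const_mul _ (by fun_prop),
          lintegral_prod_eq_prod_lintegral_of_indepFun _ _ hYindep hY]
    _ ≤ ENNReal.ofReal (exp a) * b ^ Fintype.card ι := by
        gcongr
        exact Finset.prod_le_pow_card _ _ _ fun i _ => hb i

theorem stmt11 :
    ∃ C : ℝ, 0 < C ∧
      ∀ (Ω : Type) (_ : MeasurableSpace Ω) (μ : Measure Ω), IsProbabilityMeasure μ →
      ∀ (n : ℕ) (ζ : Fin n → Ω → ℝ) (K t₀ : ℝ), 0 < K → 0 < t₀ →
      (∀ i, Measurable (ζ i)) → (∀ i ω, 0 ≤ ζ i ω) →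
      iIndepFun ζ μ →
      (∀ k t, t₀ ≤ t → μ {ω | ζ k ω < t} ≤ ENNReal.ofReal (K * t)) →
      ∀ t, t₀ ≤ t →
        μ {ω | ∑ k, ζ k ω ^ 2 < t ^ 2 * n} ≤ ENNReal.ofReal ((C * K * t) ^ n) := by
  refine ⟨2 * exp 2, by positivity, ?_⟩
  intro Ω _ μ _ n ζ K t₀ hK ht₀ hζ hζ₀ hindep hsmall t ht
  have htpos : 0 < t := ht₀.trans_le ht
  have hlaplace : ∀ k, ∫⁻ ω, ENNReal.ofReal (exp (-(2 * ζ k ω / t))) ∂μ ≤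
      ENNReal.ofReal (2 * K * t) := fun k =>
    lintegral_exp_neg_le_of_measure_lt_le (hζ k) (hζ₀ k) hK.le htpos
      fun s hs => hsmall k s (ht.trans hs)
  have hchernoff := measure_sum_le_le_of_iIndepFun (X := fun k ω => 2 * ζ k ω / t)
    (fun k => by fun_prop) (hindep.comp (fun _ x => 2 * x / t) fun _ => by fun_prop) hlaplace (2 * n)
  rw [Fintype.card_fin] at hchernoff
  calc μ {ω | ∑ k, ζ k ω ^ 2 < t ^ 2 * n}
      ≤ μ {ω | ∑ k, 2 * ζ k ω / t ≤ 2 * n} := measure_mono fun ω hω => by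
        simpa using sum_two_mul_div_le_of_sum_sq_le (a := (ζ · ω)) htpos (by simpa using hω.le)
    _ ≤ ENNReal.ofReal (exp (2 * n)) * ENNReal.ofReal (2 * K * t) ^ n := hchernoff
    _ = ENNReal.ofReal ((2 * exp 2 * K * t) ^ n) := by
        rw [← ENNReal.ofReal_pow (by positivity), ← ENNReal.ofReal_mul (exp_pos _).le,
          mul_comm 2 (n : ℝ), exp_nat_mul, ← mul_pow]
        ring_nf
end

section
/- Eigenvector stability: let M be an n×n real symmetric matrix whose eigenvalues λ_1 < λ_2 < ... < λ_n satisfy |λ_i − λ_j| ≥ g for all i ≠ j, with orthonormal eigenvectors u_1,...,u_n. Suppose v ∈ S^{n-1} and λ ∈ ℝ satisfy ‖(M − λ)v‖ ≤ ε where ε√n < g/2. Then there exists an index i_0 such that |λ − λ_{i_0}| ≤ ε√n and, writing v = ∑_i c_i u_i, one has |c_i| ≤ 2ε/g for all i ≠ i_0. -/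
open Matrix

theorem stmt12 (n : ℕ) (M : Matrix (Fin n) (Fin n) ℝ) (hM : M.IsSymm)
    (u : Fin n → Fin n → ℝ) (lam : Fin n → ℝ) (g : ℝ) (hg : 0 < g)
    (heig : ∀ i, M *ᵥ u i = lam i • u i)
    (horth : ∀ i j, u i ⬝ᵥ u j = if i = j then (1 : ℝ) else 0)
    (hgap : ∀ i j, i ≠ j → g ≤ |lam i - lam j|)
    (v : Fin n → ℝ) (hv : ∑ i, v i ^ 2 = 1) (lam₀ ε : ℝ) (hε : 0 < ε)
    (happ : Real.sqrt (∑ j, ((M *ᵥ v) j - lam₀ * v j) ^ 2) ≤ ε)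
    (hsmall : ε * Real.sqrt n < g / 2) :
    ∃ i0, |lam₀ - lam i0| ≤ ε * Real.sqrt n ∧
      ∀ i, i ≠ i0 → |v ⬝ᵥ u i| ≤ 2 * ε / g := by
  rcases Nat.eq_zero_or_pos n with hn | hn
  · subst hn; simp at hv
  set c : Fin n → ℝ := fun i => v ⬝ᵥ u i with hc
  -- residual sum is at most ε^2
  have hSnn : (0:ℝ) ≤ ∑ j, ((M *ᵥ v) j - lam₀ * v j) ^ 2 :=
    Finset.sum_nonneg fun j _ => sq_nonneg _
  have hS : ∑ j, ((M *ᵥ v) j - lam₀ * v j) ^ 2 ≤ ε ^ 2 := by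
    have := Real.sq_sqrt hSnn
    nlinarith [Real.sqrt_nonneg (∑ j, ((M *ᵥ v) j - lam₀ * v j) ^ 2)]
  -- key bound
  have hkey : ∀ i, |lam i - lam₀| * |c i| ≤ ε := by
    intro i
    have hMv : (M *ᵥ v) ⬝ᵥ u i = lam i * c i := by
      calc (M *ᵥ v) ⬝ᵥ u i = u i ⬝ᵥ (M *ᵥ v) := dotProduct_comm _ _
        _ = (u i ᵥ* M) ⬝ᵥ v := dotProduct_mulVec _ _ _
        _ = (Mᵀ *ᵥ u i) ⬝ᵥ v := by rw [mulVec_transpose]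
        _ = (M *ᵥ u i) ⬝ᵥ v := by rw [hM]
        _ = (lam i • u i) ⬝ᵥ v := by rw [heig]
        _ = lam i * (u i ⬝ᵥ v) := smul_dotProduct _ _ _
        _ = lam i * c i := by rw [hc]; simp [dotProduct_comm]
    have h1 : ∑ j, ((M *ᵥ v) j - lam₀ * v j) * u i j = (lam i - lam₀) * c i := by
      have : ∑ j, ((M *ᵥ v) j - lam₀ * v j) * u i j
          = (M *ᵥ v) ⬝ᵥ u i - lam₀ * (v ⬝ᵥ u i) := by
        simp [dotProduct, Finset.mul_sum, sub_mul, Finset.sum_sub_distrib, mul_assoc]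
      rw [this, hMv, hc]; ring
    have hcs : (∑ j, ((M *ᵥ v) j - lam₀ * v j) * u i j) ^ 2
        ≤ (∑ j, ((M *ᵥ v) j - lam₀ * v j) ^ 2) * (∑ j, u i j ^ 2) :=
      Finset.sum_mul_sq_le_sq_mul_sq _ _ _
    have hui : ∑ j, u i j ^ 2 = 1 := by
      have := horth i i; simpa [dotProduct, pow_two] using this
    rw [hui, mul_one, h1] at hcs
    have : ((lam i - lam₀) * c i) ^ 2 ≤ ε ^ 2 := le_trans hcs hS
    have habs : |(lam i - lam₀) * c i| ≤ ε := by
      have h2 := Real.sqrt_le_sqrt this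
      rwa [Real.sqrt_sq_eq_abs, Real.sqrt_sq hε.le] at h2
    calc |lam i - lam₀| * |c i| = |(lam i - lam₀) * c i| := (abs_mul _ _).symm
      _ ≤ ε := habs
  -- Parseval
  have hpar : ∑ i, c i ^ 2 = 1 := by
    set U : Matrix (Fin n) (Fin n) ℝ := Matrix.of u with hU
    have hUUT : U * Uᵀ = 1 := by
      ext i j
      simpa [Matrix.mul_apply, dotProduct, Matrix.one_apply, hU] using horth i j
    have hUTU : Uᵀ * U = 1 := mul_eq_one_comm.mp hUUT
    have h1 : ∑ i, c i ^ 2 = (U *ᵥ v) ⬝ᵥ (U *ᵥ v) := by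
      simp [dotProduct, mulVec, hc, hU, pow_two, mul_comm]
    rw [h1, dotProduct_mulVec, ← mulVec_transpose, mulVec_mulVec, hUTU, one_mulVec]
    simpa [dotProduct, pow_two] using hv
  -- find a large coefficient
  have hne : (Finset.univ : Finset (Fin n)).Nonempty := ⟨⟨0, hn⟩, Finset.mem_univ _⟩
  have hsum : ∑ _i : Fin n, (1 / (n:ℝ)) ≤ ∑ i, c i ^ 2 := by
    rw [hpar, Finset.sum_const, Finset.card_univ, Fintype.card_fin, nsmul_eq_mul]
    rw [mul_one_div, div_self (by exact_mod_cast hn.ne' : (n:ℝ) ≠ 0)]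
  obtain ⟨i0, -, hi0⟩ := Finset.exists_le_of_sum_le hne hsum
  have hsn : (0:ℝ) < Real.sqrt n := Real.sqrt_pos.mpr (by exact_mod_cast hn)
  have hci0 : 1 / Real.sqrt n ≤ |c i0| := by
    have h1 : Real.sqrt (1 / (n:ℝ)) ≤ |c i0| := by
      rw [← Real.sqrt_sq_eq_abs]; exact Real.sqrt_le_sqrt hi0
    rwa [one_div, Real.sqrt_inv, ← one_div] at h1
  have hbs : 1 ≤ |c i0| * Real.sqrt n := (div_le_iff₀ hsn).mp hci0
  refine ⟨i0, ?_, ?_⟩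
  · rw [abs_sub_comm]
    nlinarith [hkey i0, abs_nonneg (lam i0 - lam₀), hsn, hε]
  · intro i hi
    have hgapi := hgap i i0 hi
    have htri := abs_sub_le (lam i) lam₀ (lam i0)
    have hd : g / 2 < |lam i - lam₀| := by
      have h2 : |lam₀ - lam i0| ≤ ε * Real.sqrt n := by
        rw [abs_sub_comm]
        nlinarith [hkey i0, abs_nonneg (lam i0 - lam₀), hsn, hε]
      linarith
    rw [le_div_iff₀ hg]
    nlinarith [hkey i, abs_nonneg (c i)]
end
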